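/- Compatible paths: let v0, v1, v2 be duplicate-free lists, and suppose v1 is obtained from v0 by applying a sequence S1 of operations and v2 by applying a sequence S2 of operations, where the sets of elements inserted by S1 and by S2 are disjoint from each other and from the elements of v0 as appropriate so that every element inserted along S2 never occurs in any intermediate state along S1 (and vice versa). Then every intermediate state along S1 is compatible with every intermediate state along S2; in particular v1 and v2 are compatible. -/

import Mathlib

/-- Two lists are compatible: relative order of common elements agrees. -/
def Compatible {U : Type*} [DecidableEq U] (w1 w2 : List U) : Prop :=
  ∀ a b : U, a ∈ w1 → b ∈ w1 → a ∈ w2 → b ∈ w2 →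
    (w1.idxOf a < w1.idxOf b ↔ w2.idxOf a < w2.idxOf b)

/-- List operations. -/
inductive LOp (U : Type*) where
  | ins (x : U) (p : ℕ)
  | del (p : ℕ)

/-- Apply a list operation. -/
def applyOp {U : Type*} : LOp U → List U → List U
  | .ins x p, σ => σ.take p ++ x :: σ.drop p
  | .del p, σ => σ.take p ++ σ.drop (p + 1)

/-- The intermediate states of applying a sequence of operations to `v0`:
`v0` together with the result of each prefix. -/
def states {U : Type*} (S : List (LOp U)) (v0 : List U) : List (List U) :=
  S.scanl (fun σ op => applyOp op σ) v0

/-- The elements inserted by a sequence of operations. -/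
def insertedElems {U : Type*} (S : List (LOp U)) : List U :=
  S.filterMap (fun op => match op with | .ins x _ => some x | .del _ => none)

/-! Each operation inserts or deletes a single element, so of two consecutive states one is a
sublist of the other, and in duplicate-free lists a sublist keeps the relative order of its
elements. An element of a state along `S` that `S` never inserts was already in `v₀`, hence in
every state in between, so two such elements appear in the same order in that state as in `v₀`.
By freshness, the common elements of states along `S1` and `S2` are inserted by neither
sequence, so both paths reproduce their order in `v₀`. -/

section

variable {U : Type*}

theorem Compatible.symm [DecidableEq U] {w₁ w₂ : List U} (h : Compatible w₁ w₂) :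
    Compatible w₂ w₁ :=
  fun a b ha₂ hb₂ ha₁ hb₁ => (h a b ha₁ hb₁ ha₂ hb₂).symm

theorem Compatible.of_sublist [DecidableEq U] {w w' : List U} (h : w.Sublist w')
    (hnd : w'.Nodup) : Compatible w w' := by
  induction h with
  | slnil => simp [Compatible]
  | @cons w l y h ih =>
    intro a b ha hb _ _
    obtain ⟨hy, hnd⟩ := List.nodup_cons.mp hnd
    have hya : y ≠ a := fun e => hy (e ▸ h.subset ha)
    have hyb : y ≠ b := fun e => hy (e ▸ h.subset hb)
    rw [List.idxOf_cons_ne _ hya, List.idxOf_cons_ne _ hyb, Nat.succ_lt_succ_iff]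
    exact ih hnd a b ha hb (h.subset ha) (h.subset hb)
  | @cons_cons w l y h ih =>
    intro a b ha hb _ _
    simp only [List.mem_cons] at ha hb
    rcases eq_or_ne y a with rfl | hya <;> rcases eq_or_ne y b with rfl | hyb
    · simp
    · simp [List.idxOf_cons_ne _ hyb]
    · simp [List.idxOf_cons_ne _ hya]
    · have ha := ha.resolve_left hya.symm
      have hb := hb.resolve_left hyb.symm
      simp only [List.idxOf_cons_ne _ hya, List.idxOf_cons_ne _ hyb, Nat.succ_lt_succ_iff]
      exact ih (List.nodup_cons.mp hnd).2 a b ha hb (h.subset ha) (h.subset hb)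

theorem applyOp_sublist_or_sublist (op : LOp U) (v : List U) :
    (applyOp op v).Sublist v ∨ v.Sublist (applyOp op v) := by
  cases op with
  | ins x p =>
    refine .inr ?_
    conv_lhs => rw [← List.take_append_drop p v]
    exact (List.sublist_cons_self x _).append_left _
  | del p =>
    refine .inl ?_
    conv_rhs => rw [← List.take_append_drop p v]
    exact (List.drop_sublist_drop_left v (Nat.le_succ p)).append_left _

theorem compatible_applyOp [DecidableEq U] {op : LOp U} {v : List U} (hv : v.Nodup)
    (hv' : (applyOp op v).Nodup) : Compatible (applyOp op v) v :=
  (applyOp_sublist_or_sublist op v).elim (Compatible.of_sublist · hv)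
    fun h => (Compatible.of_sublist h hv').symm

theorem mem_of_mem_applyOp {op : LOp U} {v : List U} {a : U} (ha : a ∈ applyOp op v) :
    a ∈ v ∨ a ∈ insertedElems [op] := by
  cases op with
  | ins x p =>
    simp only [applyOp, List.mem_append, List.mem_cons] at ha
    rcases ha with ha | rfl | ha
    · exact .inl (List.take_subset _ _ ha)
    · exact .inr (List.mem_singleton_self _)
    · exact .inl (List.drop_subset _ _ ha)
  | del p =>
    simp only [applyOp, List.mem_append] at ha
    exact .inl (ha.elim (List.take_subset _ _ ·) (List.drop_subset _ _ ·))

theorem states_nil (v₀ : List U) : states [] v₀ = [v₀] := rfl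

theorem states_cons (op : LOp U) (S : List (LOp U)) (v₀ : List U) :
    states (op :: S) v₀ = v₀ :: states S (applyOp op v₀) :=
  List.scanl_cons

theorem mem_states_self (S : List (LOp U)) (v₀ : List U) : v₀ ∈ states S v₀ := by
  cases S <;> simp [states_nil, states_cons]

theorem insertedElems_cons (op : LOp U) (S : List (LOp U)) :
    insertedElems (op :: S) = insertedElems [op] ++ insertedElems S :=
  List.filterMap_append (l := [op])

theorem mem_of_mem_states {S : List (LOp U)} {v₀ w : List U} {a : U} (hw : w ∈ states S v₀)
    (ha : a ∈ w) (hS : a ∉ insertedElems S) : a ∈ v₀ := by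
  induction S generalizing v₀ with
  | nil => rw [states_nil, List.mem_singleton] at hw; exact hw ▸ ha
  | cons op S ih =>
    rw [states_cons, List.mem_cons] at hw
    rw [insertedElems_cons, List.mem_append, not_or] at hS
    rcases hw with rfl | hw
    · exact ha
    · exact (mem_of_mem_applyOp (ih hw hS.2)).resolve_right hS.1

theorem idxOf_lt_idxOf_iff_of_mem_states [DecidableEq U] {S : List (LOp U)} {v₀ w : List U}
    (hnd : ∀ w ∈ states S v₀, w.Nodup) (hw : w ∈ states S v₀) {a b : U} (ha : a ∈ w)
    (hb : b ∈ w) (haS : a ∉ insertedElems S) (hbS : b ∉ insertedElems S) :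
    w.idxOf a < w.idxOf b ↔ v₀.idxOf a < v₀.idxOf b := by
  induction S generalizing v₀ with
  | nil => rw [states_nil, List.mem_singleton] at hw; rw [hw]
  | cons op S ih =>
    have ha₀ := mem_of_mem_states hw ha haS
    have hb₀ := mem_of_mem_states hw hb hbS
    rw [states_cons] at hnd hw
    rcases List.mem_cons.mp hw with rfl | hw
    · rfl
    have hnd' : ∀ w ∈ states S (applyOp op v₀), w.Nodup := fun w hw => hnd w (.tail _ hw)
    rw [insertedElems_cons, List.mem_append, not_or] at haS hbS
    have hstep := compatible_applyOp (hnd _ List.mem_cons_self) (hnd' _ (mem_states_self S _))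
      a b (mem_of_mem_states hw ha haS.2) (mem_of_mem_states hw hb hbS.2) ha₀ hb₀
    exact (ih hnd' hw haS.2 hbS.2).trans hstep

end

theorem compatible_paths {U : Type*} [DecidableEq U]
    (v0 : List U) (S1 S2 : List (LOp U))
    (hnodup1 : ∀ w ∈ states S1 v0, w.Nodup)
    (hnodup2 : ∀ w ∈ states S2 v0, w.Nodup)
    (hfresh1 : ∀ w1 ∈ states S1 v0, ∀ x ∈ insertedElems S2, x ∉ w1)
    (hfresh2 : ∀ w2 ∈ states S2 v0, ∀ x ∈ insertedElems S1, x ∉ w2) :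
    ∀ w1 ∈ states S1 v0, ∀ w2 ∈ states S2 v0, Compatible w1 w2 := by
  intro w1 hw1 w2 hw2 a b ha1 hb1 ha2 hb2
  have h1 := idxOf_lt_idxOf_iff_of_mem_states hnodup1 hw1 ha1 hb1
    (fun h => hfresh2 w2 hw2 a h ha2) (fun h => hfresh2 w2 hw2 b h hb2)
  have h2 := idxOf_lt_idxOf_iff_of_mem_states hnodup2 hw2 ha2 hb2
    (fun h => hfresh1 w1 hw1 a h ha1) (fun h => hfresh1 w1 hw1 b h hb1)
  exact h1.trans h2.symm
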